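/- arXiv:1205.2978 — 2 statements merged into one kernel-verified Lean document; each statement's English description precedes it below -/
import Mathlib

section
/- Let f : [2, L] → ℝ be differentiable with f ≥ 0, and suppose there exist constants C > 0 and ε > 0 with ε > 1/C such that f'(t) - (1/C) f(t) + C e^{-εj} e^{εt} ≥ 0 for all t ∈ [2, L], where j ≥ L is a constant. Then f(2) ≤ C' (e^{-L/C} f(L) + e^{-j/C}) for some constant C' depending only on C and ε. -/
/-!
Multiplying by the integrating factor `e^{-t/C}` turns the differential inequality into
monotonicity of `e^{-t/C} f(t) + K e^{-εj} e^{(ε - 1/C) t}` with `K = C / (ε - 1/C)`.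
Comparing its values at `2` and `L`, the forcing term at `L` is at most `K e^{-j/C}` because
`ε - 1/C > 0` and `L ≤ j`, and the one at `2` is nonnegative and can be dropped.
-/

open Real Set

section IntegratingFactor

variable {f : ℝ → ℝ} {a b c ε A : ℝ}

theorem hasDerivAt_exp_neg_mul_mul_add (hεc : ε ≠ c) {t : ℝ} (hf : DifferentiableAt ℝ f t) :
    HasDerivAt (fun s => exp (-c * s) * f s + A / (ε - c) * exp ((ε - c) * s))
      (exp (-c * t) * (deriv f t - c * f t + A * exp (ε * t))) t := by
  have hexp : ∀ k : ℝ, HasDerivAt (fun s => exp (k * s)) (exp (k * t) * k) t := fun k => by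
    simpa using ((hasDerivAt_id t).const_mul k).exp
  refine ((hexp (-c)).mul hf.hasDerivAt |>.add
    ((hexp (ε - c)).const_mul (A / (ε - c)))).congr_deriv ?_
  have hsplit : exp ((ε - c) * t) = exp (-c * t) * exp (ε * t) := by
    rw [← exp_add]; ring_nf
  rw [hsplit]
  field_simp [sub_ne_zero.mpr hεc]
  ring

theorem monotoneOn_exp_neg_mul_mul_add (hεc : ε ≠ c)
    (hf : ∀ t ∈ Icc a b, DifferentiableAt ℝ f t)
    (hineq : ∀ t ∈ Icc a b, 0 ≤ deriv f t - c * f t + A * exp (ε * t)) :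
    MonotoneOn (fun s => exp (-c * s) * f s + A / (ε - c) * exp ((ε - c) * s)) (Icc a b) := by
  have hderiv := fun t ht => hasDerivAt_exp_neg_mul_mul_add (A := A) hεc (hf t ht)
  refine monotoneOn_of_hasDerivWithinAt_nonneg (convex_Icc a b)
    (f' := fun t => exp (-c * t) * (deriv f t - c * f t + A * exp (ε * t)))
    (fun t ht => (hderiv t ht).continuousAt.continuousWithinAt) (fun t ht => ?_) (fun t ht => ?_)
  all_goals rw [interior_Icc] at ht
  · exact (hderiv t (Ioo_subset_Icc_self ht)).hasDerivWithinAt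
  · exact mul_nonneg (exp_pos _).le (hineq t (Ioo_subset_Icc_self ht))

theorem exp_neg_mul_mul_le_of_deriv_sub_mul_add_nonneg (hcε : c < ε) (hA : 0 ≤ A) (hab : a ≤ b)
    (hf : ∀ t ∈ Icc a b, DifferentiableAt ℝ f t)
    (hineq : ∀ t ∈ Icc a b, 0 ≤ deriv f t - c * f t + A * exp (ε * t)) :
    exp (-c * a) * f a ≤ exp (-c * b) * f b + A / (ε - c) * exp ((ε - c) * b) := by
  have hmono := monotoneOn_exp_neg_mul_mul_add hcε.ne' hf hineq
    (left_mem_Icc.mpr hab) (right_mem_Icc.mpr hab) hab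
  have hforcing : 0 ≤ A / (ε - c) * exp ((ε - c) * a) :=
    mul_nonneg (div_nonneg hA (sub_pos.mpr hcε).le) (exp_pos _).le
  linarith

end IntegratingFactor

/-- ODE comparison lemma: if `f' - f/C + C e^{-εj} e^{εt} ≥ 0` on `[2, L]`,
with `ε > 1/C` and `j ≥ L ≥ 2`, then `f 2 ≤ C' (e^{-L/C} f L + e^{-j/C})`
for a constant `C'` depending only on `C` and `ε`. -/
theorem stmt0 (C ε : ℝ) (hC : 0 < C) (hε : ε > 1 / C) :
    ∃ C' > (0:ℝ), ∀ (f : ℝ → ℝ) (L j : ℝ), 2 ≤ L → L ≤ j →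
      (∀ t ∈ Set.Icc (2:ℝ) L, DifferentiableAt ℝ f t) →
      (∀ t ∈ Set.Icc (2:ℝ) L, 0 ≤ f t) →
      (∀ t ∈ Set.Icc (2:ℝ) L,
        deriv f t - (1 / C) * f t + C * exp (-ε * j) * exp (ε * t) ≥ 0) →
      f 2 ≤ C' * (exp (-L / C) * f L + exp (-j / C)) := by
  have hgap : 0 < ε - 1 / C := sub_pos.mpr hε
  set K := C / (ε - 1 / C)
  have hK : 0 < K := div_pos hC hgap
  refine ⟨exp (2 / C) * (1 + K), by positivity, fun f L j hL hLj hf hpos hineq => ?_⟩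
  have hcmp := exp_neg_mul_mul_le_of_deriv_sub_mul_add_nonneg (A := C * exp (-ε * j)) hε
    (by positivity) hL hf hineq
  have hforcing : C * exp (-ε * j) / (ε - 1 / C) * exp ((ε - 1 / C) * L) ≤ K * exp (-j / C) := by
    rw [mul_div_right_comm, mul_assoc, ← exp_add]
    gcongr
    rw [show -j / C = -ε * j + (ε - 1 / C) * j by ring]
    gcongr
  have hfactor : exp (2 / C) * exp (-(1 / C) * 2) = 1 := by
    rw [← exp_add]; ring_nf; exact exp_zero
  have hLexp : exp (-(1 / C) * L) = exp (-L / C) := by ring_nf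
  rw [hLexp] at hcmp
  have hfL_term := mul_nonneg hK.le (mul_nonneg (exp_pos (-L / C)).le (hpos L ⟨hL, le_rfl⟩))
  calc f 2 = exp (2 / C) * (exp (-(1 / C) * 2) * f 2) := by rw [← mul_assoc, hfactor, one_mul]
    _ ≤ exp (2 / C) * (exp (-L / C) * f L + K * exp (-j / C)) := by
        gcongr; linarith
    _ ≤ exp (2 / C) * (1 + K) * (exp (-L / C) * f L + exp (-j / C)) := by
        rw [mul_assoc]; gcongr; nlinarith [exp_pos (-j / C)]
end

section
/- Let u : ℝ² → ℝ^K be a C² map and τ : ℝ² → ℝ^K satisfy Δu + A(x) = τ where A(x) ⊥ ∇u(x) pointwise (i.e. A(x) · ∂_i u(x) = 0 for i = 1,2). Then for every t > 0, ∫_{∂D_t} (|∂_r u|² - r^{-2} |∂_θ u|²) ds = (2/t) ∫_{D_t} τ · (x · ∇u) dx, where x · ∇u = x₁ ∂₁ u + x₂ ∂₂ u. -/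
open Real MeasureTheory RealInnerProductSpace

/-!
In polar coordinates `x = r e^{iθ}` put `G = (r² |∂_r u|² - |∂_θ u|²) / 2` and
`H = ⟪∂_θ u, ∂_r u⟫`. Using the symmetry of the second derivative and the rotation invariance
of the Laplacian, `∂_r G + ∂_θ H = r ⟪Δu, x · ∇u⟫`, and `r dr dθ` is the area element. The
divergence theorem on the rectangle `[0, t] × [-π, π]` then expresses `∫_{D_t} ⟪Δu, x · ∇u⟫`
as `∫ G(t, θ) dθ`: the contribution of `H` cancels by periodicity in `θ` and `G` vanishes at
`r = 0`. Finally `⟪τ, x · ∇u⟫ = ⟪Δu, x · ∇u⟫` because `A ⊥ ∇u`.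
-/

open Complex Laplacian Set

section

variable {E : Type*} [NormedAddCommGroup E] [InnerProductSpace ℝ E] {u : ℂ → E}

lemma ContinuousLinearMap.apply_self_add_apply_I_mul_self (B : ℂ →L[ℝ] ℂ →L[ℝ] E)
    (hB : ∀ v w, B v w = B w v) (w : ℂ) :
    B w w + B (I * w) (I * w) = ‖w‖ ^ 2 • (B 1 1 + B I I) := by
  obtain ⟨a, b⟩ := w
  have hw : (⟨a, b⟩ : ℂ) = a • (1 : ℂ) + b • I := by apply Complex.ext <;> simp
  have hIw : I * ⟨a, b⟩ = (-b) • (1 : ℂ) + a • I := by apply Complex.ext <;> simp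
  rw [hIw, ← normSq_eq_norm_sq, normSq_mk, hw]
  simp only [map_add, map_smul, add_apply, smul_apply, hB I 1]
  module

lemma laplacian_complexPlane_eq_fderiv_fderiv (u : ℂ → E) (x : ℂ) :
    Δ u x = fderiv ℝ (fderiv ℝ u) x 1 1 + fderiv ℝ (fderiv ℝ u) x I I := by
  simp [InnerProductSpace.laplacian_eq_iteratedFDeriv_complexPlane, iteratedFDeriv_two_apply]

lemma fderiv_fderiv_apply_const {x : ℂ} (hu : DifferentiableAt ℝ (fderiv ℝ u) x) (v w : ℂ) :
    fderiv ℝ (fun y => fderiv ℝ u y v) x w = fderiv ℝ (fderiv ℝ u) x w v := by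
  simp [fderiv_clm_apply hu (differentiableAt_const v)]

lemma inner_apply_eq_zero_of_inner_apply_one_of_inner_apply_I (a : E) (L : ℂ →L[ℝ] E)
    (h1 : ⟪a, L 1⟫ = 0) (hI : ⟪a, L I⟫ = 0) (z : ℂ) : ⟪a, L z⟫ = 0 := by
  have hz : z = z.re • (1 : ℂ) + z.im • I := by apply Complex.ext <;> simp
  rw [hz, map_add, map_smul, map_smul, inner_add_right, real_inner_smul_right,
    real_inner_smul_right, h1, hI, mul_zero, mul_zero, add_zero]

lemma fderiv_apply_one_zero_eq_of_hasDerivAt {F : Type*} [NormedAddCommGroup F]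
    [NormedSpace ℝ F] {f : ℝ × ℝ → F} {r θ : ℝ} {d : F} (hf : DifferentiableAt ℝ f (r, θ))
    (hd : HasDerivAt (fun s => f (s, θ)) d r) : fderiv ℝ f (r, θ) (1, 0) = d :=
  (hf.hasFDerivAt.comp_hasDerivAt r ((hasDerivAt_id r).prodMk (hasDerivAt_const r θ))).unique hd

lemma fderiv_apply_zero_one_eq_of_hasDerivAt {F : Type*} [NormedAddCommGroup F]
    [NormedSpace ℝ F] {f : ℝ × ℝ → F} {r θ : ℝ} {d : F} (hf : DifferentiableAt ℝ f (r, θ))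
    (hd : HasDerivAt (fun φ => f (r, φ)) d θ) : fderiv ℝ f (r, θ) (0, 1) = d :=
  (hf.hasFDerivAt.comp_hasDerivAt θ ((hasDerivAt_const θ r).prodMk (hasDerivAt_id θ))).unique hd

lemma hasDerivAt_circleMap_radius (θ r : ℝ) :
    HasDerivAt (circleMap 0 · θ) (circleMap 0 1 θ) r := by
  simpa [circleMap] using (ofRealCLM.hasDerivAt (x := r)).mul_const (exp (θ * I))

lemma contDiff_uncurry_circleMap_zero {n : WithTop ℕ∞} :
    ContDiff ℝ n (fun p : ℝ × ℝ => circleMap 0 p.1 p.2) := by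
  have h1 : ContDiff ℝ n (fun p : ℝ × ℝ => (p.1 : ℂ)) := ofRealCLM.contDiff.comp contDiff_fst
  have h2 : ContDiff ℝ n (fun p : ℝ × ℝ => (p.2 : ℂ)) := ofRealCLM.contDiff.comp contDiff_snd
  simp only [circleMap, zero_add]
  fun_prop

lemma polarCoord_symm_eq_circleMap (p : ℝ × ℝ) :
    Complex.polarCoord.symm p = circleMap 0 p.1 p.2 := by
  simp [circleMap, Complex.exp_mul_I]

lemma setIntegral_ball_eq_setIntegral_polar {F : Type*} [NormedAddCommGroup F]
    [NormedSpace ℝ F] (f : ℂ → F) (t : ℝ) :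
    ∫ x in Metric.ball 0 t, f x = ∫ p in Icc (0, -π) (t, π), p.1 • f (circleMap 0 p.1 p.2) := by
  have htarget : polarCoord.target ∩ {q : ℝ × ℝ | q.1 < t} = Ioo 0 t ×ˢ Ioo (-π) π := by
    ext ⟨r, θ⟩
    simp only [polarCoord_target, mem_inter_iff, mem_prod, mem_Ioi, mem_Ioo, mem_ofPred_eq]
    tauto
  calc ∫ x in Metric.ball 0 t, f x
      = ∫ p in polarCoord.target, p.1 • (Metric.ball 0 t).indicator f (circleMap 0 p.1 p.2) := by
        rw [← integral_indicator measurableSet_ball, ← Complex.integral_comp_polarCoord_symm]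
        simp_rw [polarCoord_symm_eq_circleMap]
    _ = ∫ p in polarCoord.target, {q : ℝ × ℝ | q.1 < t}.indicator
          (fun q => q.1 • f (circleMap 0 q.1 q.2)) p := by
        refine setIntegral_congr_fun polarCoord.open_target.measurableSet fun p hp => ?_
        have hmem : circleMap 0 p.1 p.2 ∈ Metric.ball 0 t ↔ p.1 < t := by
          rw [mem_ball_zero_iff, norm_circleMap_zero, abs_of_pos (show 0 < p.1 from hp.1)]
        by_cases h : p.1 < t
        · rw [indicator_of_mem (hmem.2 h), indicator_of_mem (show p ∈ {q : ℝ × ℝ | q.1 < t} from h)]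
        · rw [indicator_of_notMem (mt hmem.1 h),
            indicator_of_notMem (show p ∉ {q : ℝ × ℝ | q.1 < t} from h), smul_zero]
    _ = ∫ p in Ioo 0 t ×ˢ Ioo (-π) π, p.1 • f (circleMap 0 p.1 p.2) := by
        rw [setIntegral_indicator (measurableSet_lt measurable_fst measurable_const), htarget]
    _ = ∫ p in Icc (0, -π) (t, π), p.1 • f (circleMap 0 p.1 p.2) := by
        rw [Icc_prod_eq, Measure.volume_eq_prod]
        exact setIntegral_congr_set (Measure.set_prod_ae_eq Ioo_ae_eq_Icc Ioo_ae_eq_Icc)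

/- The functions `G` and `H` of the header, via `∂_r u = Du(z) e^{iθ}` and `∂_θ u = Du(z) (i z)`
at `z = r e^{iθ}`. -/
noncomputable def pohozaevFluxRadial (u : ℂ → E) (p : ℝ × ℝ) : ℝ :=
  (‖fderiv ℝ u (circleMap 0 p.1 p.2) (circleMap 0 p.1 p.2)‖ ^ 2
    - ‖fderiv ℝ u (circleMap 0 p.1 p.2) (I * circleMap 0 p.1 p.2)‖ ^ 2) / 2

noncomputable def pohozaevFluxAngular (u : ℂ → E) (p : ℝ × ℝ) : ℝ :=
  ⟪fderiv ℝ u (circleMap 0 p.1 p.2) (I * circleMap 0 p.1 p.2),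
    fderiv ℝ u (circleMap 0 p.1 p.2) (circleMap 0 1 p.2)⟫

lemma periodic_pohozaevFluxRadial (r : ℝ) :
    Function.Periodic (fun θ => pohozaevFluxRadial u (r, θ)) (2 * π) := fun θ => by
  simp only [pohozaevFluxRadial, periodic_circleMap 0 r θ]

lemma periodic_pohozaevFluxAngular (r : ℝ) :
    Function.Periodic (fun θ => pohozaevFluxAngular u (r, θ)) (2 * π) := fun θ => by
  simp only [pohozaevFluxAngular, periodic_circleMap 0 r θ, periodic_circleMap 0 1 θ]

lemma contDiff_pohozaevFluxRadial (hu : ContDiff ℝ 2 u) :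
    ContDiff ℝ 1 (pohozaevFluxRadial u) := by
  have hP := contDiff_uncurry_circleMap_zero (n := 1)
  have hL := (hu.fderiv_right le_rfl).comp hP
  exact (((hL.clm_apply hP).norm_sq ℝ).sub
    ((hL.clm_apply (contDiff_const.mul hP)).norm_sq ℝ)).div_const 2

lemma contDiff_pohozaevFluxAngular (hu : ContDiff ℝ 2 u) :
    ContDiff ℝ 1 (pohozaevFluxAngular u) := by
  have hP := contDiff_uncurry_circleMap_zero (n := 1)
  have hL := (hu.fderiv_right le_rfl).comp hP
  exact (hL.clm_apply (contDiff_const.mul hP)).inner ℝ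
    (hL.clm_apply ((contDiff_circleMap 0 1).comp contDiff_snd))

lemma hasDerivAt_pohozaevFluxRadial (hu : ContDiff ℝ 2 u) (r θ : ℝ) :
    letI z := circleMap 0 r θ
    letI w := circleMap 0 1 θ
    HasDerivAt (fun s => pohozaevFluxRadial u (s, θ))
      (⟪fderiv ℝ u z z, fderiv ℝ (fderiv ℝ u) z w z + fderiv ℝ u z w⟫
        - ⟪fderiv ℝ u z (I * z), fderiv ℝ (fderiv ℝ u) z w (I * z) + fderiv ℝ u z (I * w)⟫) r := by
  have hz := hasDerivAt_circleMap_radius θ r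
  have hL : HasDerivAt (fun s => fderiv ℝ u (circleMap 0 s θ))
      (fderiv ℝ (fderiv ℝ u) (circleMap 0 r θ) (circleMap 0 1 θ)) r :=
    ((hu.fderiv_right le_rfl).differentiable one_ne_zero _).hasFDerivAt.comp_hasDerivAt r hz
  exact ((((hL.clm_apply hz).norm_sq).sub (hL.clm_apply (hz.const_mul I)).norm_sq).div_const 2)
    |>.congr_deriv (by ring)

lemma hasDerivAt_pohozaevFluxAngular (hu : ContDiff ℝ 2 u) (r θ : ℝ) :
    letI z := circleMap 0 r θ
    letI w := circleMap 0 1 θ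
    HasDerivAt (fun φ => pohozaevFluxAngular u (r, φ))
      (⟪fderiv ℝ u z (I * z), fderiv ℝ (fderiv ℝ u) z (z * I) w + fderiv ℝ u z (w * I)⟫
        + ⟪fderiv ℝ (fderiv ℝ u) z (z * I) (I * z) + fderiv ℝ u z (I * (z * I)), fderiv ℝ u z w⟫)
      θ := by
  have hz := hasDerivAt_circleMap 0 r θ
  have hL : HasDerivAt (fun φ => fderiv ℝ u (circleMap 0 r φ))
      (fderiv ℝ (fderiv ℝ u) (circleMap 0 r θ) (circleMap 0 r θ * I)) θ :=
    ((hu.fderiv_right le_rfl).differentiable one_ne_zero _).hasFDerivAt.comp_hasDerivAt θ hz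
  exact (hL.clm_apply (hz.const_mul I)).inner ℝ (hL.clm_apply (hasDerivAt_circleMap 0 1 θ))

lemma pohozaevFlux_derivs_sum_eq (L : ℂ →L[ℝ] E) (B : ℂ →L[ℝ] ℂ →L[ℝ] E)
    (hB : ∀ v w, B v w = B w v) {r : ℝ} {z w : ℂ} (hw : ‖w‖ = 1) (hz : z = r * w) :
    (⟪L z, B w z + L w⟫ - ⟪L (I * z), B w (I * z) + L (I * w)⟫)
      + (⟪L (I * z), B (z * I) w + L (w * I)⟫ + ⟪B (z * I) (I * z) + L (I * (z * I)), L w⟫)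
      = r * ⟪B 1 1 + B I I, L z⟫ := by
  have hrot := congrArg (⟪·, L w⟫) (B.apply_self_add_apply_I_mul_self hB w)
  simp only [hw, one_pow, one_smul, inner_add_left] at hrot
  have h1 : z = r • w := by rw [hz, Complex.real_smul]
  have h2 : I * z = r • (I * w) := by rw [hz, Complex.real_smul]; ring
  have h3 : z * I = r • (I * w) := by rw [hz, Complex.real_smul]; ring
  have h4 : I * (z * I) = -(r • w) := by
    rw [hz, Complex.real_smul]; linear_combination (↑r * w) * Complex.I_sq
  rw [h4, h2, h3, mul_comm w I, h1]
  simp only [map_smul, map_neg, smul_apply, inner_add_left, inner_add_right,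
    real_inner_smul_left, real_inner_smul_right, inner_neg_left, hB (I * w) w]
  linear_combination r ^ 2 * hrot - r ^ 2 * real_inner_comm (L w) (B w w)

lemma fderiv_pohozaevFluxRadial_add_fderiv_pohozaevFluxAngular (hu : ContDiff ℝ 2 u)
    (p : ℝ × ℝ) :
    fderiv ℝ (pohozaevFluxRadial u) p (1, 0) + fderiv ℝ (pohozaevFluxAngular u) p (0, 1)
      = p.1 * ⟪Δ u (circleMap 0 p.1 p.2),
          fderiv ℝ u (circleMap 0 p.1 p.2) (circleMap 0 p.1 p.2)⟫ := by
  obtain ⟨r, θ⟩ := p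
  have hB := second_derivative_symmetric
    (fun y => ((hu.differentiable two_ne_zero) y).hasFDerivAt)
    (((hu.fderiv_right le_rfl).differentiable one_ne_zero (circleMap 0 r θ)).hasFDerivAt)
  rw [fderiv_apply_one_zero_eq_of_hasDerivAt
      ((contDiff_pohozaevFluxRadial hu).differentiable one_ne_zero _)
      (hasDerivAt_pohozaevFluxRadial hu r θ),
    fderiv_apply_zero_one_eq_of_hasDerivAt
      ((contDiff_pohozaevFluxAngular hu).differentiable one_ne_zero _)
      (hasDerivAt_pohozaevFluxAngular hu r θ),
    laplacian_complexPlane_eq_fderiv_fderiv]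
  exact pohozaevFlux_derivs_sum_eq _ _ hB (by simp) (by simp [circleMap])

lemma integral_ball_inner_laplacian_fderiv_self (hu : ContDiff ℝ 2 u) {t : ℝ} (ht : 0 < t) :
    ∫ x in Metric.ball 0 t, ⟪Δ u x, fderiv ℝ u x x⟫
      = ∫ θ in -π..π, pohozaevFluxRadial u (t, θ) := by
  have hG := contDiff_pohozaevFluxRadial hu
  have hH := contDiff_pohozaevFluxAngular hu
  have hH_ends (r : ℝ) : pohozaevFluxAngular u (r, π) = pohozaevFluxAngular u (r, -π) := by
    simpa [show π - 2 * π = -π by ring] using ((periodic_pohozaevFluxAngular r).sub_eq π).symm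
  have hG_center (θ : ℝ) : pohozaevFluxRadial u (0, θ) = 0 := by simp [pohozaevFluxRadial]
  rw [setIntegral_ball_eq_setIntegral_polar]
  simp_rw [smul_eq_mul, ← fderiv_pohozaevFluxRadial_add_fderiv_pohozaevFluxAngular hu]
  rw [integral_divergence_prod_Icc_of_hasFDerivAt_of_le _ _ _ _ (0, -π) (t, π)
    (Prod.mk_le_mk.2 ⟨ht.le, by linarith [pi_pos]⟩) hG.continuous.continuousOn
    hH.continuous.continuousOn (fun p _ => (hG.differentiable one_ne_zero p).hasFDerivAt)
    (fun p _ => (hH.differentiable one_ne_zero p).hasFDerivAt)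
    ((((hG.continuous_fderiv one_ne_zero).clm_apply continuous_const).add
      ((hH.continuous_fderiv one_ne_zero).clm_apply continuous_const)).integrableOn_Icc)]
  simp [hH_ends, hG_center]

lemma two_div_mul_pohozaevFluxRadial {t : ℝ} (ht : 0 < t) (θ : ℝ) :
    2 / t * pohozaevFluxRadial u (t, θ)
      = (‖fderiv ℝ u (circleMap 0 t θ) (circleMap 0 t θ / (t : ℂ))‖ ^ 2
          - t⁻¹ ^ 2 * ‖fderiv ℝ u (circleMap 0 t θ) (I * circleMap 0 t θ)‖ ^ 2) * t := by
  have hdiv : circleMap 0 t θ / (t : ℂ) = t⁻¹ • circleMap 0 t θ := by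
    rw [Complex.real_smul, Complex.ofReal_inv, div_eq_mul_inv, mul_comm]
  rw [hdiv, map_smul, norm_smul, Real.norm_eq_abs, abs_of_pos (inv_pos.mpr ht), mul_pow,
    pohozaevFluxRadial]
  field_simp

end

/-- Pohozaev identity for almost harmonic maps: if `Δu + A = τ` on `ℝ² ≃ ℂ` with
`A` pointwise orthogonal to the partial derivatives of `u`, then for every `t > 0`,
`∫_{∂D_t} (|∂_r u|² - r⁻²|∂_θ u|²) ds = (2/t) ∫_{D_t} τ · (x·∇u) dx`. -/
theorem stmt2 (K : ℕ) (u A τ : ℂ → EuclideanSpace ℝ (Fin K))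
    (hu : ContDiff ℝ 2 u)
    (heq : ∀ x : ℂ,
      fderiv ℝ (fun y => fderiv ℝ u y 1) x 1
        + fderiv ℝ (fun y => fderiv ℝ u y Complex.I) x Complex.I + A x = τ x)
    (hperp : ∀ x : ℂ, ⟪A x, fderiv ℝ u x 1⟫ = 0 ∧ ⟪A x, fderiv ℝ u x Complex.I⟫ = 0) :
    ∀ t : ℝ, 0 < t →
      (∫ θ in (0:ℝ)..(2 * Real.pi),
          (‖fderiv ℝ u (circleMap 0 t θ) (circleMap 0 t θ / (t:ℂ))‖ ^ 2
            - t⁻¹ ^ 2 * ‖fderiv ℝ u (circleMap 0 t θ) (Complex.I * circleMap 0 t θ)‖ ^ 2) * t)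
        = (2 / t) * ∫ x in Metric.ball (0:ℂ) t, ⟪τ x, fderiv ℝ u x x⟫ := by
  intro t ht
  have hu' : Differentiable ℝ (fderiv ℝ u) := (hu.fderiv_right le_rfl).differentiable one_ne_zero
  have hτ (x : ℂ) : ⟪τ x, fderiv ℝ u x x⟫ = ⟪Δ u x, fderiv ℝ u x x⟫ := by
    rw [← heq x, fderiv_fderiv_apply_const (hu' x), fderiv_fderiv_apply_const (hu' x),
      ← laplacian_complexPlane_eq_fderiv_fderiv, inner_add_left,
      inner_apply_eq_zero_of_inner_apply_one_of_inner_apply_I _ _ (hperp x).1 (hperp x).2,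
      add_zero]
  simp_rw [hτ, integral_ball_inner_laplacian_fderiv_self hu ht,
    ← two_div_mul_pohozaevFluxRadial ht, intervalIntegral.integral_const_mul]
  simpa [show -π + 2 * π = π by ring] using
    congrArg (2 / t * ·) ((periodic_pohozaevFluxRadial t).intervalIntegral_add_eq 0 (-π))
end
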